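/- arXiv:1408.0258 — 7 statements merged into one kernel-verified Lean document; each statement's English description precedes it below -/
import Mathlib

section
/- Let $v:2^A\to\mathbb{R}$ be a set function on a finite set $A$ with $|A|=n\ge 1$, and let $c\ge 0$. Suppose for every nonempty $B\subseteq A$, $\sum_{b\in B}(v(B)-v(B\setminus\{b\}))\le c$. Then $v(A)\le v(\emptyset)+H_n\, c$, where $H_n=\sum_{t=1}^n 1/t$ is the $n$-th harmonic number. -/
/-! Peel off elements one at a time: by averaging, a set `B` of size `k + 1` has an element whose
removal lowers `v` by at most `c / (k + 1)`, so the `n` removals that empty `A` cost at most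
`c / n + ⋯ + c / 1 = H_n c` in total. -/

open Finset

theorem exists_sub_erase_le_div_card {α : Type*} [DecidableEq α] {v : Finset α → ℝ}
    {B : Finset α} (hB : B.Nonempty) {c : ℝ} (h : ∑ b ∈ B, (v B - v (B.erase b)) ≤ c) :
    ∃ b ∈ B, v B - v (B.erase b) ≤ c / #B := by
  refine exists_le_of_sum_le hB ?_
  rwa [sum_const, nsmul_eq_mul, mul_div_cancel₀ _ (by exact_mod_cast hB.card_ne_zero)]

theorem le_add_harmonic_mul_of_sum_sub_erase_le {α : Type*} [DecidableEq α]
    (v : Finset α → ℝ) (c : ℝ)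
    (h : ∀ B : Finset α, B.Nonempty → ∑ b ∈ B, (v B - v (B.erase b)) ≤ c) (B : Finset α) :
    v B ≤ v ∅ + (∑ t ∈ range #B, (1 : ℝ) / (t + 1)) * c := by
  induction hk : #B generalizing B with
  | zero => simp [card_eq_zero.mp hk]
  | succ k ih =>
    have hB : B.Nonempty := card_pos.mp (by omega)
    obtain ⟨b, hb, hdrop⟩ := exists_sub_erase_le_div_card hB (h B hB)
    have hrest := ih (B.erase b) (by rw [card_erase_of_mem hb, hk, Nat.add_sub_cancel])
    have hcard : (#B : ℝ) = k + 1 := by exact_mod_cast hk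
    rw [hcard] at hdrop
    calc v B ≤ v (B.erase b) + c / (k + 1) := by linarith
      _ ≤ v ∅ + (∑ t ∈ range k, (1 : ℝ) / (t + 1)) * c + c / (k + 1) := by linarith
      _ = v ∅ + (∑ t ∈ range (k + 1), (1 : ℝ) / (t + 1)) * c := by
        rw [sum_range_succ]; ring

theorem greedy_harmonic_bound_general {α : Type*} [DecidableEq α] [Fintype α]
    (v : Finset α → ℝ) (n : ℕ) (hn : n = Fintype.card α)
    (c : ℝ)
    (h : ∀ B : Finset α, B.Nonempty → ∑ b ∈ B, (v B - v (B.erase b)) ≤ c) :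
    v Finset.univ ≤ v ∅ + (∑ t ∈ Finset.range n, (1 : ℝ) / (t + 1)) * c := by
  simpa [hn] using le_add_harmonic_mul_of_sum_sub_erase_le v c h univ

theorem greedy_harmonic_bound {α : Type*} [DecidableEq α] [Fintype α]
    (v : Finset α → ℝ) (n : ℕ) (hn : n = Fintype.card α) (hn1 : 1 ≤ n)
    (c : ℝ) (hc : 0 ≤ c)
    (h : ∀ B : Finset α, B.Nonempty → ∑ b ∈ B, (v B - v (B.erase b)) ≤ c) :
    v Finset.univ ≤ v ∅ + (∑ t ∈ Finset.range n, (1 : ℝ) / (t + 1)) * c :=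
  greedy_harmonic_bound_general v n hn c h
end

section
/- Let $v:2^U\to\mathbb{R}$ be a submodular function on a finite set $U$, and let $A_1,\dots,A_k$ and $S_1,\dots,S_k$ be subsets of $U$ with $S_i\subseteq A_i$ for each $i$, where $A_1,\dots,A_k$ are pairwise disjoint. Write $S=\bigcup_i S_i$ and for each $i$ let $L^{(t)}=\bigcup_{j\le t}A_j \cup \bigcup_{j>t}S_j$. Then $\sum_{i=1}^k v(A_i\cup\bigcup_{j\ne i}S_j) \ge v(\bigcup_{i=1}^k A_i) + (k-1)\,v(S)$. -/
/-!
Interpolate between `⋃ S` and `⋃ A` through the hybrid sets `L t`, which take `A j` for `j < t`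
and `S j` for `j ≥ t`. With `X i = A i ∪ ⋃_{j ≠ i} S j`, submodularity and monotonicity give
`v (X i) + v (L i) ≥ v (L (i + 1)) + v (⋃ S)`, since `L (i + 1) ⊆ X i ∪ L i` and
`⋃ S ⊆ X i ∩ L i`. Summing over `i`, the terms `v (L i)` telescope.
-/

open Finset

section Hybrid

variable {α : Type*} [DecidableEq α] {k : ℕ} (A S : Fin k → Finset α)

def hybrid (t : ℕ) : Finset α :=
  (univ.filter fun j : Fin k => (j : ℕ) < t).biUnion A ∪
    (univ.filter fun j : Fin k => t ≤ (j : ℕ)).biUnion S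

lemma hybrid_zero : hybrid A S 0 = univ.biUnion S := by
  simp [hybrid]

lemma hybrid_of_le {t : ℕ} (ht : k ≤ t) : hybrid A S t = univ.biUnion A := by
  have hlt : univ.filter (fun j : Fin k => (j : ℕ) < t) = univ :=
    filter_true_of_mem fun j _ => j.isLt.trans_le ht
  have hge : univ.filter (fun j : Fin k => t ≤ (j : ℕ)) = ∅ :=
    filter_false_of_mem fun j _ => not_le.mpr (j.isLt.trans_le ht)
  simp [hybrid, hlt, hge]

lemma hybrid_succ_subset (i : Fin k) :
    hybrid A S (i + 1) ⊆ (A i ∪ (univ.erase i).biUnion S) ∪ hybrid A S i := by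
  intro x hx
  simp only [hybrid, mem_union, mem_biUnion, mem_filter, mem_univ, true_and, mem_erase,
    and_true] at hx ⊢
  rcases hx with ⟨j, hj, hxj⟩ | ⟨j, hj, hxj⟩
  · rcases eq_or_ne j i with rfl | hne
    · exact .inl (.inl hxj)
    · exact .inr (.inl ⟨j, by omega, hxj⟩)
  · have hne : j ≠ i := by rintro rfl; omega
    exact .inl (.inr ⟨j, hne, hxj⟩)

variable {A S}

lemma biUnion_subset_hybrid (hSA : ∀ i, S i ⊆ A i) (t : ℕ) :
    univ.biUnion S ⊆ hybrid A S t := by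
  intro x hx
  obtain ⟨j, -, hxj⟩ := mem_biUnion.mp hx
  simp only [hybrid, mem_union, mem_biUnion, mem_filter, mem_univ, true_and]
  rcases lt_or_ge (j : ℕ) t with h | h
  · exact .inl ⟨j, h, hSA j hxj⟩
  · exact .inr ⟨j, h, hxj⟩

lemma biUnion_subset_union_biUnion_erase (hSA : ∀ i, S i ⊆ A i) (i : Fin k) :
    univ.biUnion S ⊆ A i ∪ (univ.erase i).biUnion S := by
  intro x hx
  obtain ⟨j, -, hxj⟩ := mem_biUnion.mp hx
  rcases eq_or_ne j i with rfl | hne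
  · exact mem_union_left _ (hSA j hxj)
  · exact mem_union_right _ (mem_biUnion.mpr ⟨j, mem_erase.mpr ⟨hne, mem_univ j⟩, hxj⟩)

end Hybrid

section Submodular

variable {α : Type*} [DecidableEq α] (v : Finset α → ℝ)
  (hmono : ∀ X Y : Finset α, X ⊆ Y → v X ≤ v Y)
  (hsub : ∀ X Y : Finset α, v X + v Y ≥ v (X ∪ Y) + v (X ∩ Y))
include hmono hsub

lemma add_le_add_of_subset_union_of_subset_inter {X Y P Q : Finset α}
    (hP : P ⊆ X ∪ Y) (hQ : Q ⊆ X ∩ Y) : v P + v Q ≤ v X + v Y := by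
  linarith [hsub X Y, hmono _ _ hP, hmono _ _ hQ]

lemma telescoping_hybrid_bound {k : ℕ} (X : Fin k → Finset α) (L : ℕ → Finset α)
    (T : Finset α) (hunion : ∀ i : Fin k, L (i + 1) ⊆ X i ∪ L i)
    (hinter : ∀ i : Fin k, T ⊆ X i ∩ L i) :
    v (L k) - v (L 0) + k * v T ≤ ∑ i, v (X i) := by
  have hstep : ∑ i : Fin k, (v (L (i + 1)) - v (L i) + v T) ≤ ∑ i, v (X i) :=
    sum_le_sum fun i _ => by
      linarith [add_le_add_of_subset_union_of_subset_inter v hmono hsub (hunion i) (hinter i)]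
  have htel : ∑ i : Fin k, (v (L (i + 1)) - v (L i)) = v (L k) - v (L 0) := by
    rw [Fin.sum_univ_eq_sum_range (fun i => v (L (i + 1)) - v (L i))]
    exact sum_range_sub (v ∘ L) k
  rw [sum_add_distrib, htel, sum_const, card_univ, Fintype.card_fin, nsmul_eq_mul] at hstep
  exact hstep

end Submodular

theorem hybridization_bound_general {α : Type*} [DecidableEq α]
    (v : Finset α → ℝ)
    (hmono : ∀ X Y : Finset α, X ⊆ Y → v X ≤ v Y)
    (hsub : ∀ X Y : Finset α, v X + v Y ≥ v (X ∪ Y) + v (X ∩ Y))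
    (k : ℕ) (A S : Fin k → Finset α)
    (hSA : ∀ i, S i ⊆ A i) :
    ∑ i : Fin k, v (A i ∪ (Finset.univ.erase i).biUnion S) ≥
      v (Finset.univ.biUnion A) + ((k : ℝ) - 1) * v (Finset.univ.biUnion S) := by
  have h := telescoping_hybrid_bound v hmono hsub (fun i => A i ∪ (univ.erase i).biUnion S)
    (hybrid A S) (univ.biUnion S) (hybrid_succ_subset A S)
    fun i => subset_inter (biUnion_subset_union_biUnion_erase hSA i) (biUnion_subset_hybrid hSA i)
  rw [hybrid_of_le A S le_rfl, hybrid_zero] at h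
  linarith

theorem hybridization_bound {α : Type*} [DecidableEq α] [Fintype α]
    (v : Finset α → ℝ)
    (hmono : ∀ X Y : Finset α, X ⊆ Y → v X ≤ v Y)
    (hsub : ∀ X Y : Finset α, v X + v Y ≥ v (X ∪ Y) + v (X ∩ Y))
    (k : ℕ) (A S : Fin k → Finset α)
    (hSA : ∀ i, S i ⊆ A i)
    (hdisj : ∀ i j, i ≠ j → Disjoint (A i) (A j)) :
    ∑ i : Fin k, v (A i ∪ (Finset.univ.erase i).biUnion S) ≥
      v (Finset.univ.biUnion A) + ((k : ℝ) - 1) * v (Finset.univ.biUnion S) :=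
  hybridization_bound_general v hmono hsub k A S hSA
end

section
/- Let $A_1,\dots,A_k$ be pairwise disjoint finite sets with $|A_i|\le m$ for all $i$, $U=\bigcup_i A_i$, and let $v:2^U\to\mathbb{R}_{\ge 0}$ be monotone and submodular with $v(\emptyset)=0$. Let $S_i\subseteq A_i$ and $S=\bigcup_i S_i$, and suppose that for every $i$ and every $B\subseteq A_i$, $v(S)-v(S\setminus S_i) \ge \sum_{b\in B}\big(v(B\cup(S\setminus S_i))-v((B\setminus\{b\})\cup(S\setminus S_i))\big)$. Then $v(U)\le (H_m+1)\,v(S)$, where $H_m$ is the $m$-th harmonic number. -/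
/-!
Write `S₋ᵢ := S \ Sᵢ` and `Mᵢ := v S - v S₋ᵢ`. By submodularity, `v U - v S` is at most the sum of
the marginal values `v (Aᵢ ∪ S) - v S`, and each of these is at most `v (Aᵢ ∪ S₋ᵢ) - v S₋ᵢ`.
Peel `Aᵢ` off one element at a time, always removing an element whose marginal value is at most
the average: by the equilibrium condition, with `j` elements left this costs at most `Mᵢ / j`, so
the whole term is at most `H_m Mᵢ`. Finally `∑ᵢ Mᵢ ≤ v S` by submodularity, the `Sᵢ` being
disjoint.
-/

open Finset Function

def IsSubmodular {β : Type*} [Lattice β] (v : β → ℝ) : Prop :=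
  ∀ x y, v (x ⊔ y) + v (x ⊓ y) ≤ v x + v y

theorem IsSubmodular.sub_le_sub_of_le {β : Type*} [Lattice β] {v : β → ℝ} (hsub : IsSubmodular v)
    (hmono : Monotone v) {x y : β} (hxy : x ≤ y) (a : β) :
    v (a ⊔ y) - v y ≤ v (a ⊔ x) - v x := by
  have hsup : (a ⊔ x) ⊔ y = a ⊔ y := by rw [sup_assoc, sup_eq_right.mpr hxy]
  have hinf : v x ≤ v ((a ⊔ x) ⊓ y) := hmono (le_inf le_sup_right hxy)
  have := hsub (a ⊔ x) y
  rw [hsup] at this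
  linarith

section Finset

variable {α : Type*} [DecidableEq α]

theorem IsSubmodular.sub_le_sum_biUnion {ι : Type*} {v : Finset α → ℝ} (hsub : IsSubmodular v)
    (hmono : Monotone v) (X : Finset α) (A : ι → Finset α) (I : Finset ι) :
    v (I.biUnion A ∪ X) - v X ≤ ∑ i ∈ I, (v (A i ∪ X) - v X) := by
  classical
  induction I using Finset.induction_on with
  | empty => simp
  | insert j I hj ih =>
    have hj_marginal :=
      hsub.sub_le_sub_of_le hmono (subset_union_right (s₁ := I.biUnion A) (s₂ := X)) (A j)
    rw [Finset.sup_eq_union, Finset.sup_eq_union] at hj_marginal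
    rw [biUnion_insert, sum_insert hj, union_assoc]
    linarith

theorem IsSubmodular.sum_sub_sdiff_le {ι : Type*} {v : Finset α → ℝ} (hsub : IsSubmodular v)
    (hmono : Monotone v) {U : Finset α} {S : ι → Finset α} (hSU : ∀ i, S i ⊆ U)
    (hS : Pairwise (Disjoint on S)) (J : Finset ι) :
    ∑ i ∈ J, (v U - v (U \ S i)) ≤ v (J.biUnion S) - v ∅ := by
  classical
  induction J using Finset.induction_on with
  | empty => simp
  | insert j J hj ih =>
    have hJ : J.biUnion S ⊆ U \ S j := by
      refine biUnion_subset.mpr fun i hi => subset_sdiff.mpr ⟨hSU i, hS ?_⟩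
      rintro rfl
      exact hj hi
    have hj_marginal := hsub.sub_le_sub_of_le hmono hJ (S j)
    rw [Finset.sup_eq_union, Finset.sup_eq_union, union_sdiff_of_subset (hSU j)] at hj_marginal
    rw [sum_insert hj, biUnion_insert]
    linarith

theorem sub_le_harmonic_mul_of_sum_marginal_le (v : Finset α → ℝ) (T : Finset α) (M : ℝ) :
    ∀ B : Finset α, (∀ B' ⊆ B, ∑ b ∈ B', (v (B' ∪ T) - v (B'.erase b ∪ T)) ≤ M) →
      v (B ∪ T) - v T ≤ (∑ t ∈ range #B, (1 : ℝ) / (t + 1)) * M := by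
  intro B
  induction B using Finset.strongInduction with
  | H B ih =>
    intro hB
    rcases B.eq_empty_or_nonempty with rfl | hne
    · simp
    have hcard : (0 : ℝ) < #B := by exact_mod_cast hne.card_pos
    have havg : ∑ b ∈ B, (v (B ∪ T) - v (B.erase b ∪ T)) ≤ ∑ _b ∈ B, M / #B := by
      rw [sum_const, nsmul_eq_mul, mul_div_cancel₀ _ hcard.ne']
      exact hB B subset_rfl
    obtain ⟨b, hb, hb_marginal⟩ := exists_le_of_sum_le hne havg
    have hrest := ih (B.erase b) (erase_ssubset hb)
      fun B' hB' => hB B' (hB'.trans (erase_subset b B))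
    rw [← card_erase_add_one hb, Nat.cast_add_one] at hb_marginal
    rw [← card_erase_add_one hb, sum_range_succ, add_mul, one_div_mul_eq_div]
    linarith

end Finset

theorem poa_upper_bound_general {α : Type*} [DecidableEq α] [Fintype α]
    (k m : ℕ) (A : Fin k → Finset α)
    (hdisj : ∀ i j, i ≠ j → Disjoint (A i) (A j))
    (hcover : Finset.univ.biUnion A = (Finset.univ : Finset α))
    (hcard : ∀ i, (A i).card ≤ m)
    (v : Finset α → ℝ)
    (hmono : ∀ X Y : Finset α, X ⊆ Y → v X ≤ v Y)
    (hsub : ∀ X Y : Finset α, v X + v Y ≥ v (X ∪ Y) + v (X ∩ Y))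
    (hempty : v ∅ = 0)
    (S : Fin k → Finset α) (hSA : ∀ i, S i ⊆ A i)
    (Sall : Finset α) (hSall : Sall = Finset.univ.biUnion S)
    (heq : ∀ i : Fin k, ∀ B ⊆ A i,
      v Sall - v (Sall \ S i) ≥
        ∑ b ∈ B, (v (B ∪ (Sall \ S i)) - v (B.erase b ∪ (Sall \ S i)))) :
    v Finset.univ ≤ ((∑ t ∈ Finset.range m, (1 : ℝ) / (t + 1)) + 1) * v Sall := by
  have hv : Monotone v := hmono
  have hv_sub : IsSubmodular v := fun X Y => hsub X Y
  have hSU : ∀ i, S i ⊆ Sall := fun i => hSall ▸ subset_biUnion_of_mem S (mem_univ i)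
  set Hm := ∑ t ∈ range m, (1 : ℝ) / (t + 1)
  have hterm : ∀ i, v (A i ∪ Sall) - v Sall ≤ Hm * (v Sall - v (Sall \ S i)) := fun i =>
    calc v (A i ∪ Sall) - v Sall ≤ v (A i ∪ Sall \ S i) - v (Sall \ S i) :=
          hv_sub.sub_le_sub_of_le hv sdiff_subset (A i)
      _ ≤ (∑ t ∈ range #(A i), (1 : ℝ) / (t + 1)) * (v Sall - v (Sall \ S i)) :=
          sub_le_harmonic_mul_of_sum_marginal_le v _ _ (A i) (heq i)
      _ ≤ Hm * (v Sall - v (Sall \ S i)) :=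
          mul_le_mul_of_nonneg_right
            (sum_le_sum_of_subset_of_nonneg (range_subset_range.mpr (hcard i))
              fun _ _ _ => by positivity)
            (sub_nonneg.mpr (hv sdiff_subset))
  have hunion := hv_sub.sub_le_sum_biUnion hv Sall A univ
  have htele := hv_sub.sum_sub_sdiff_le hv hSU
    (fun i j hij => (hdisj i j hij).mono (hSA i) (hSA j)) univ
  rw [hcover, union_eq_left.mpr (subset_univ Sall)] at hunion
  rw [← hSall, hempty, sub_zero] at htele
  have hHm : 0 ≤ Hm := sum_nonneg fun _ _ => by positivity
  calc v univ ≤ v Sall + ∑ i, Hm * (v Sall - v (Sall \ S i)) := by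
        linarith [sum_le_sum fun i (_ : i ∈ univ) => hterm i]
    _ = v Sall + Hm * ∑ i, (v Sall - v (Sall \ S i)) := by rw [mul_sum]
    _ ≤ v Sall + Hm * v Sall := by gcongr
    _ = (Hm + 1) * v Sall := by ring

theorem poa_upper_bound {α : Type*} [DecidableEq α] [Fintype α]
    (k m : ℕ) (A : Fin k → Finset α)
    (hdisj : ∀ i j, i ≠ j → Disjoint (A i) (A j))
    (hcover : Finset.univ.biUnion A = (Finset.univ : Finset α))
    (hcard : ∀ i, (A i).card ≤ m)
    (v : Finset α → ℝ)
    (hnn : ∀ T : Finset α, 0 ≤ v T)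
    (hmono : ∀ X Y : Finset α, X ⊆ Y → v X ≤ v Y)
    (hsub : ∀ X Y : Finset α, v X + v Y ≥ v (X ∪ Y) + v (X ∩ Y))
    (hempty : v ∅ = 0)
    (S : Fin k → Finset α) (hSA : ∀ i, S i ⊆ A i)
    (Sall : Finset α) (hSall : Sall = Finset.univ.biUnion S)
    (heq : ∀ i : Fin k, ∀ B ⊆ A i,
      v Sall - v (Sall \ S i) ≥
        ∑ b ∈ B, (v (B ∪ (Sall \ S i)) - v (B.erase b ∪ (Sall \ S i)))) :
    v Finset.univ ≤ ((∑ t ∈ Finset.range m, (1 : ℝ) / (t + 1)) + 1) * v Sall :=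
  poa_upper_bound_general k m A hdisj hcover hcard v hmono hsub hempty S hSA Sall hSall heq
end

section
/- Let $v(T)=H_{|T|}$ for $T$ a subset of a finite set $A$ (with $H_0=0$), and let $p:A\to\mathbb{R}$ be a price function. Suppose $B\subseteq A$ is nonempty and $\sum_{a\in B}p(a)>1$. Then there exists $b\in B$ with $v(B)-\sum_{a\in B}p(a) < v(B\setminus\{b\})-\sum_{a\in B\setminus\{b\}}p(a)$; i.e., $B$ does not maximize the buyer's utility $u(T)=v(T)-\sum_{a\in T}p(a)$. -/
open Finset

theorem drop_item_improves {α : Type*} [DecidableEq α] [Fintype α]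
    (v : Finset α → ℝ)
    (hv : ∀ T : Finset α, v T = ∑ j ∈ Finset.range T.card, (1 : ℝ) / (j + 1))
    (p : α → ℝ) (B : Finset α) (hB : B.Nonempty)
    (hp : 1 < ∑ a ∈ B, p a) :
    ∃ b ∈ B, v B - ∑ a ∈ B, p a < v (B.erase b) - ∑ a ∈ B.erase b, p a := by
  have hcard : 0 < B.card := card_pos.mpr hB
  -- find b with p b > 1 / B.card
  have hb : ∃ b ∈ B, 1 / (B.card : ℝ) < p b := by
    by_contra h
    push_neg at h
    have : ∑ a ∈ B, p a ≤ ∑ _a ∈ B, 1 / (B.card : ℝ) :=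
      Finset.sum_le_sum fun a ha => h a ha
    rw [Finset.sum_const, nsmul_eq_mul] at this
    have hc : (B.card : ℝ) ≠ 0 := Nat.cast_ne_zero.mpr hcard.ne'
    rw [mul_one_div, div_self hc] at this
    linarith
  obtain ⟨b, hbB, hpb⟩ := hb
  refine ⟨b, hbB, ?_⟩
  have hcerase : (B.erase b).card = B.card - 1 := card_erase_of_mem hbB
  have hvdiff : v B = v (B.erase b) + 1 / (B.card : ℝ) := by
    rw [hv, hv, hcerase]
    have : B.card = (B.card - 1) + 1 := (Nat.succ_pred_eq_of_pos hcard).symm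
    rw [this, Finset.sum_range_succ]
    rw [Nat.cast_sub hcard]
    norm_num
    exact_mod_cast this
  have hsum : ∑ a ∈ B, p a = ∑ a ∈ B.erase b, p a + p b :=
    (Finset.sum_erase_add B p hbB).symm
  rw [hvdiff, hsum]
  linarith
end

section
/- Let $v:2^U\to\mathbb{R}_{\ge 0}$ be monotone and submodular on a finite set $U$, let $p:U\to\mathbb{R}_{\ge 0}$, and let $B\subseteq U$ satisfy: for all $a\in B$, $p(a)\le v(B)-v(B\setminus\{a\})$. Then for all $T\subseteq B$, $v(B)-p(B)\ge v(T)-p(T)$, where $p(S)=\sum_{a\in S}p(a)$. -/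
open Finset

theorem bundle_preferred_to_subsets {α : Type*} [DecidableEq α] [Fintype α]
    (v : Finset α → ℝ)
    (hnn : ∀ T : Finset α, 0 ≤ v T)
    (hmono : ∀ X Y : Finset α, X ⊆ Y → v X ≤ v Y)
    (hsub : ∀ X Y : Finset α, v X + v Y ≥ v (X ∪ Y) + v (X ∩ Y))
    (p : α → ℝ) (hpnn : ∀ a, 0 ≤ p a)
    (B : Finset α)
    (hp : ∀ a ∈ B, p a ≤ v B - v (B.erase a)) :
    ∀ T ⊆ B, v B - ∑ a ∈ B, p a ≥ v T - ∑ a ∈ T, p a := by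
  intro T hT
  have key : ∀ n : ℕ, ∀ T ⊆ B, (B \ T).card = n →
      v B - ∑ a ∈ B, p a ≥ v T - ∑ a ∈ T, p a := by
    intro n
    induction n with
    | zero =>
      intro T hT hcard
      have : B = T := by
        have := Finset.card_eq_zero.mp hcard
        have hBT : B ⊆ T := fun x hx => by
          by_contra hxT
          exact absurd (Finset.mem_sdiff.mpr ⟨hx, hxT⟩) (by simp [this])
        exact Finset.Subset.antisymm hBT hT
      simp [this]
    | succ n ih =>
      intro T hT hcard
      have hne : (B \ T).Nonempty := by
        rw [← Finset.card_pos, hcard]; omega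
      obtain ⟨a, ha⟩ := hne
      obtain ⟨haB, haT⟩ := Finset.mem_sdiff.mp ha
      set T' := insert a T with hT'
      have hT'B : T' ⊆ B := Finset.insert_subset haB hT
      have hcard' : (B \ T').card = n := by
        have : B \ T' = (B \ T).erase a := by
          ext x; simp [hT', Finset.mem_sdiff, Finset.mem_erase]; tauto
        rw [this, Finset.card_erase_of_mem ha, hcard]; omega
      have h1 := ih T' hT'B hcard'
      -- v T' - v T ≥ p a
      have hsub' := hsub T' (B.erase a)
      have hU : T' ∪ B.erase a = B := by
        ext x
        simp [hT', Finset.mem_union, Finset.mem_erase]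
        constructor
        · rintro (rfl | h | ⟨_, h⟩)
          · exact haB
          · exact hT h
          · exact h
        · intro hx
          by_cases hxa : x = a
          · left; exact hxa
          · right; right; exact ⟨hxa, hx⟩
      have hI : T' ∩ B.erase a = T := by
        ext x
        simp only [hT', Finset.mem_inter, Finset.mem_erase, Finset.mem_insert]
        constructor
        · rintro ⟨rfl | h, hxa, _⟩
          · exact absurd rfl hxa
          · exact h
        · intro hx
          exact ⟨Or.inr hx, fun h => haT (h ▸ hx), hT hx⟩
      rw [hU, hI] at hsub'
      have hpa := hp a haB
      have hmarg : p a ≤ v T' - v T := by linarith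
      have hsumT' : ∑ x ∈ T', p x = p a + ∑ x ∈ T, p x := by
        rw [hT', Finset.sum_insert haT]
      linarith
  exact key (B \ T).card T hT rfl
end

section
/- Let $v:2^U\to\mathbb{R}_{\ge 0}$ be monotone and submodular on a finite set $U$, let $S\subseteq U$ be a fixed set, define prices $\tilde p(a)=v(S)-v(S\setminus\{a\})$ for $a\in S$ and $\tilde p(a')=v(U)+1$ for $a'\notin S$, and let $u(X)=v(X)-\tilde p(X)$. Then (1) any utility maximizer $T$ of $u$ satisfies $T\subseteq S$, and (2) if $T\subsetneq S$ maximizes $u$, then $T\cup\{a\}$ also maximizes $u$ for any $a\in S\setminus T$. -/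
open Finset

theorem marginal_pricing_sells_exactly_S {α : Type*} [DecidableEq α] [Fintype α]
    (v : Finset α → ℝ)
    (hnn : ∀ T : Finset α, 0 ≤ v T)
    (hmono : ∀ X Y : Finset α, X ⊆ Y → v X ≤ v Y)
    (hsub : ∀ X Y : Finset α, v X + v Y ≥ v (X ∪ Y) + v (X ∩ Y))
    (S : Finset α) (p : α → ℝ)
    (hpS : ∀ a ∈ S, p a = v S - v (S.erase a))
    (hpOut : ∀ a ∉ S, p a = v Finset.univ + 1) :
    (∀ T : Finset α,
        (∀ X : Finset α, v X - ∑ a ∈ X, p a ≤ v T - ∑ a ∈ T, p a) → T ⊆ S) ∧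
    (∀ T : Finset α,
        (∀ X : Finset α, v X - ∑ a ∈ X, p a ≤ v T - ∑ a ∈ T, p a) → T ⊂ S →
        ∀ a ∈ S \ T,
          ∀ X : Finset α, v X - ∑ a' ∈ X, p a' ≤ v (insert a T) - ∑ a' ∈ insert a T, p a') := by
  constructor
  · intro T hT
    by_contra hns
    obtain ⟨a, haT, haS⟩ := not_subset.mp hns
    have hkey := hT (T.erase a)
    have hsum : ∑ x ∈ T, p x = p a + ∑ x ∈ T.erase a, p x :=
      (Finset.add_sum_erase T p haT).symm
    have hpa : p a = v Finset.univ + 1 := hpOut a haS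
    have h1 : v T ≤ v Finset.univ := hmono _ _ (subset_univ T)
    have h2 : 0 ≤ v (T.erase a) := hnn _
    rw [hsum, hpa] at hkey
    linarith
  · intro T hT hTS a ha X
    obtain ⟨haS, haT⟩ := Finset.mem_sdiff.mp ha
    have hTsub : T ⊆ S.erase a := fun x hx =>
      Finset.mem_erase.mpr ⟨fun h => haT (h ▸ hx), hTS.1 hx⟩
    have hsub' := hsub (insert a T) (S.erase a)
    have hu : insert a T ∪ S.erase a = S := by
      rw [Finset.insert_union, Finset.union_eq_right.mpr hTsub,
        Finset.insert_erase haS]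
    have hi : insert a T ∩ S.erase a = T := by
      rw [Finset.insert_inter_of_notMem (Finset.notMem_erase a S),
        Finset.inter_eq_left.mpr hTsub]
    rw [hu, hi] at hsub'
    have hpa : p a = v S - v (S.erase a) := hpS a haS
    have hsum : ∑ x ∈ insert a T, p x = p a + ∑ x ∈ T, p x :=
      Finset.sum_insert haT
    have := hT X
    rw [hsum, hpa]
    linarith
end

section
/- There exist pairwise disjoint two-element sets $A_1=\{a,b\}$, $A_2=\{c,d\}$ and a monotone submodular function $v:2^{\{a,b,c,d\}}\to\mathbb{R}_{\ge 0}$ (explicitly: $v(\emptyset)=0$, $v(b)=2.503$, $v(d)=2.703$, $v(c)=2.803$, $v(a)=3.203$, $v(cd)=4.1045$, $v(ab)=4.4045$, $v(bd)=5.204$, $v(bc)=v(ad)=5.304$, $v(ac)=5.404$, $v(acd)=v(abd)=6.5045$, $v(abc)=v(bcd)=6.6045$, $v(abcd)=7.6045$) such that the two-player game in which player $i$ chooses $S_i\subseteq A_i$ and receives payoff $u_i(S_1,S_2)=\sum_{x\in S_i}(v(S_1\cup S_2)-v((S_1\cup S_2)\setminus\{x\}))$ has no pure Nash equilibrium. 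-/
/-!
Player 1's best response is `{a}` against every `S₂` except `{c, d}`, against which it is `{b}`;
player 2's best response is `{c, d}` against `{a}` and `{c}` against every other `S₁`. So best
responses cycle through `({a}, {c, d}) → ({b}, {c, d}) → ({b}, {c}) → ({a}, {c}) → ({a}, {c, d})`,
and no profile is a fixed point.
-/

open Finset

section Game

variable {α M N : Type*} [DecidableEq α]

/-- The payoff of a seller offering `S` when `U` is the set of all offered items: each item is
priced at its marginal contribution to `U`. -/
def payoff [AddCommGroup M] (v : Finset α → M) (S U : Finset α) : M :=
  ∑ x ∈ S, (v U - v (U.erase x))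

def IsPureNash [AddCommGroup M] [LE M] (v : Finset α → M) (A₁ A₂ S₁ S₂ : Finset α) : Prop :=
  S₁ ⊆ A₁ ∧ S₂ ⊆ A₂ ∧
    (∀ S₁' ⊆ A₁, payoff v S₁' (S₁' ∪ S₂) ≤ payoff v S₁ (S₁ ∪ S₂)) ∧
    (∀ S₂' ⊆ A₂, payoff v S₂' (S₁ ∪ S₂') ≤ payoff v S₂ (S₁ ∪ S₂))

theorem payoff_map [AddCommGroup M] [AddCommGroup N] (φ : M →+ N) (v : Finset α → M)
    (S U : Finset α) : payoff (φ ∘ v) S U = φ (payoff v S U) := by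
  simp [payoff, map_sum, map_sub]

theorem isPureNash_map_iff [AddCommGroup M] [LinearOrder M] [AddCommGroup N] [Preorder N]
    (φ : M →+ N) (hφ : StrictMono φ) (v : Finset α → M) (A₁ A₂ S₁ S₂ : Finset α) :
    IsPureNash (φ ∘ v) A₁ A₂ S₁ S₂ ↔ IsPureNash v A₁ A₂ S₁ S₂ := by
  simp only [IsPureNash, payoff_map, hφ.le_iff_le]

theorem submodular_map [AddCommGroup M] [Preorder M] [AddCommGroup N] [Preorder N]
    (φ : M →+ N) (hφ : Monotone φ) {v : Finset α → M}
    (hv : ∀ S T, v (S ∪ T) + v (S ∩ T) ≤ v S + v T) (S T : Finset α) :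
    (φ ∘ v) (S ∪ T) + (φ ∘ v) (S ∩ T) ≤ (φ ∘ v) S + (φ ∘ v) T := by
  simpa only [Function.comp_apply, ← map_add] using hφ (hv S T)

end Game

/-- The valuation of the counterexample in units of `10⁻⁴`, so that its properties are decidable;
the items `a, b, c, d` are `0, 1, 2, 3`. -/
def valuationInt (T : Finset (Fin 4)) : ℤ :=
  match decide (0 ∈ T), decide (1 ∈ T), decide (2 ∈ T), decide (3 ∈ T) with
  | false, false, false, false => 0
  | true,  false, false, false => 32030
  | false, true,  false, false => 25030
  | false, false, true,  false => 28030
  | false, false, false, true  => 27030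
  | true,  true,  false, false => 44045
  | true,  false, true,  false => 54040
  | true,  false, false, true  => 53040
  | false, true,  true,  false => 53040
  | false, true,  false, true  => 52040
  | false, false, true,  true  => 41045
  | true,  true,  true,  false => 66045
  | true,  true,  false, true  => 65045
  | true,  false, true,  true  => 65045
  | false, true,  true,  true  => 66045
  | true,  true,  true,  true  => 76045

theorem valuationInt_nonneg : ∀ T, 0 ≤ valuationInt T := by decide

theorem valuationInt_monotone : Monotone valuationInt := by
  unfold Monotone; decide

theorem valuationInt_submodular :
    ∀ S T, valuationInt (S ∪ T) + valuationInt (S ∩ T) ≤ valuationInt S + valuationInt T := by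
  decide

theorem valuationInt_not_isPureNash : ¬ ∃ S₁ S₂, IsPureNash valuationInt {0, 1} {2, 3} S₁ S₂ := by
  unfold IsPureNash payoff; decide

noncomputable def ofBasisPoints : ℤ →+ ℝ :=
  (AddMonoidHom.mulRight (10000⁻¹ : ℝ)).comp (Int.castAddHom ℝ)

theorem ofBasisPoints_strictMono : StrictMono ofBasisPoints := fun m n h => by
  simpa [ofBasisPoints] using h

/-- Items: `a = 0`, `b = 1`, `c = 2`, `d = 3`; vendor 1 owns `{a,b}`, vendor 2 owns `{c,d}`.
The payoff of each vendor is the sum of the marginal contributions of its offered items. -/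
theorem no_pure_nash_counterexample :
    ∃ v : Finset (Fin 4) → ℝ,
      (∀ T : Finset (Fin 4), 0 ≤ v T) ∧
      (∀ S T : Finset (Fin 4), S ⊆ T → v S ≤ v T) ∧
      (∀ S T : Finset (Fin 4), v S + v T ≥ v (S ∪ T) + v (S ∩ T)) ∧
      v ∅ = 0 ∧ v {0} = 3.203 ∧ v {1} = 2.503 ∧ v {2} = 2.803 ∧ v {3} = 2.703 ∧
      v {0, 1} = 4.4045 ∧ v {0, 2} = 5.404 ∧ v {0, 3} = 5.304 ∧
      v {1, 2} = 5.304 ∧ v {1, 3} = 5.204 ∧ v {2, 3} = 4.1045 ∧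
      v {0, 1, 2} = 6.6045 ∧ v {0, 1, 3} = 6.5045 ∧ v {0, 2, 3} = 6.5045 ∧
      v {1, 2, 3} = 6.6045 ∧ v {0, 1, 2, 3} = 7.6045 ∧
      ¬ ∃ S₁ S₂ : Finset (Fin 4), S₁ ⊆ {0, 1} ∧ S₂ ⊆ {2, 3} ∧
        (∀ S₁' ⊆ ({0, 1} : Finset (Fin 4)),
          ∑ x ∈ S₁', (v (S₁' ∪ S₂) - v ((S₁' ∪ S₂).erase x)) ≤
            ∑ x ∈ S₁, (v (S₁ ∪ S₂) - v ((S₁ ∪ S₂).erase x))) ∧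
        (∀ S₂' ⊆ ({2, 3} : Finset (Fin 4)),
          ∑ x ∈ S₂', (v (S₁ ∪ S₂') - v ((S₁ ∪ S₂').erase x)) ≤
            ∑ x ∈ S₂, (v (S₁ ∪ S₂) - v ((S₁ ∪ S₂).erase x))) := by
  have hmono := ofBasisPoints_strictMono.monotone
  refine ⟨ofBasisPoints ∘ valuationInt, fun T => by simpa using hmono (valuationInt_nonneg T),
    hmono.comp valuationInt_monotone, submodular_map ofBasisPoints hmono valuationInt_submodular,
    ?_, ?_, ?_, ?_, ?_, ?_, ?_, ?_, ?_, ?_, ?_, ?_, ?_, ?_, ?_, ?_,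
    fun ⟨S₁, S₂, hNash⟩ => valuationInt_not_isPureNash
      ⟨S₁, S₂, (isPureNash_map_iff ofBasisPoints ofBasisPoints_strictMono ..).1 hNash⟩⟩ <;>
  norm_num [ofBasisPoints, valuationInt, Fin.ext_iff]
end
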